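/- arXiv:1410.5004 — 4 statements merged into one kernel-verified Lean document; each statement's English description precedes it below -/
import Mathlib

section
/- Suppose (x,y) ∈ F is a global minimizer of G over F, and there exist Lagrange multipliers λ₁, λ₂ ≥ 0 satisfying the KKT conditions Mx = λ₁Q₁x + λ₂Q₂x, My = λ₁Q₁y + λ₂Q₂y, and λᵢ·(1 − fᵢ(x,y)) = 0 for i = 1,2. Then there exists a vector z ∈ ℝ⁴ with zᵀQ₁z ≥ 1, zᵀQ₂z ≥ 1 and zᵀMz = G(x,y); that is, the pair (z,0) is also a global minimizer, so the minimization of G over F always admits a real optimal solution (one with vanishing imaginary part). -/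
open Matrix

lemma quad_expand (Q : Matrix (Fin 4) (Fin 4) ℝ) (x y : Fin 4 → ℝ) (c s : ℝ) :
    (c • x + s • y) ⬝ᵥ Q.mulVec (c • x + s • y)
      = c^2 * (x ⬝ᵥ Q.mulVec x) + c*s * (x ⬝ᵥ Q.mulVec y)
        + c*s * (y ⬝ᵥ Q.mulVec x) + s^2 * (y ⬝ᵥ Q.mulVec y) := by
  simp [Matrix.mulVec_add, Matrix.mulVec_smul, dotProduct_add, add_dotProduct,
    smul_dotProduct, dotProduct_smul, smul_eq_mul]
  ring

lemma smul_quad (Q : Matrix (Fin 4) (Fin 4) ℝ) (w : Fin 4 → ℝ) (t : ℝ) :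
    (t • w) ⬝ᵥ Q.mulVec (t • w) = t^2 * (w ⬝ᵥ Q.mulVec w) := by
  simp [Matrix.mulVec_smul, smul_dotProduct, dotProduct_smul, smul_eq_mul]
  ring


/-- If `(x, y)` is a global minimizer of
`G(x,y) = xᵀMx + yᵀMy` over the feasible set
`F = {(x,y) : f₁(x,y) ≥ 1 ∧ f₂(x,y) ≥ 1}` (where
`fᵢ(x,y) = xᵀQᵢx + yᵀQᵢy`), and there exist KKT multipliers
`λ₁, λ₂ ≥ 0` with `Mx = λ₁Q₁x + λ₂Q₂x`, `My = λ₁Q₁y + λ₂Q₂y`,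
and `λᵢ (1 - fᵢ(x,y)) = 0`, then there is a real vector `z ∈ ℝ⁴`
with `zᵀQ₁z ≥ 1`, `zᵀQ₂z ≥ 1` and `zᵀMz = G(x,y)`; i.e. `(z, 0)`
is also a global minimizer. -/
theorem real_optimal_solution_exists
    (M Q₁ Q₂ : Matrix (Fin 4) (Fin 4) ℝ)
    (hMsymm : M.IsSymm) (hQ₁symm : Q₁.IsSymm) (hQ₂symm : Q₂.IsSymm)
    (hMpd : M.PosDef)
    (x y : Fin 4 → ℝ) (lam₁ lam₂ : ℝ)
    (hlam₁ : 0 ≤ lam₁) (hlam₂ : 0 ≤ lam₂)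
    (hfeas₁ : x ⬝ᵥ Q₁.mulVec x + y ⬝ᵥ Q₁.mulVec y ≥ 1)
    (hfeas₂ : x ⬝ᵥ Q₂.mulVec x + y ⬝ᵥ Q₂.mulVec y ≥ 1)
    (hmin : ∀ x' y' : Fin 4 → ℝ,
      x' ⬝ᵥ Q₁.mulVec x' + y' ⬝ᵥ Q₁.mulVec y' ≥ 1 →
      x' ⬝ᵥ Q₂.mulVec x' + y' ⬝ᵥ Q₂.mulVec y' ≥ 1 →
      x ⬝ᵥ M.mulVec x + y ⬝ᵥ M.mulVec y ≤
        x' ⬝ᵥ M.mulVec x' + y' ⬝ᵥ M.mulVec y')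
    (hKKTx : M.mulVec x = lam₁ • Q₁.mulVec x + lam₂ • Q₂.mulVec x)
    (hKKTy : M.mulVec y = lam₁ • Q₁.mulVec y + lam₂ • Q₂.mulVec y)
    (hcs₁ : lam₁ * (1 - (x ⬝ᵥ Q₁.mulVec x + y ⬝ᵥ Q₁.mulVec y)) = 0)
    (hcs₂ : lam₂ * (1 - (x ⬝ᵥ Q₂.mulVec x + y ⬝ᵥ Q₂.mulVec y)) = 0) :
    ∃ z : Fin 4 → ℝ,
      z ⬝ᵥ Q₁.mulVec z ≥ 1 ∧ z ⬝ᵥ Q₂.mulVec z ≥ 1 ∧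
      z ⬝ᵥ M.mulVec z = x ⬝ᵥ M.mulVec x + y ⬝ᵥ M.mulVec y := by
  -- positive definiteness facts
  have hpd_pos : ∀ v : Fin 4 → ℝ, v ≠ 0 → 0 < v ⬝ᵥ M.mulVec v := fun v hv => by
    simpa using hMpd.dotProduct_mulVec_pos hv
  have hpd_nonneg : ∀ v : Fin 4 → ℝ, 0 ≤ v ⬝ᵥ M.mulVec v := fun v => by
    simpa using hMpd.posSemidef.dotProduct_mulVec_nonneg v
  have hpd0 : ∀ v : Fin 4 → ℝ, v ⬝ᵥ M.mulVec v ≤ 0 → v = 0 := by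
    intro v hv
    by_contra h
    exact absurd hv (not_le.mpr (hpd_pos v h))
  -- scalar abbreviations
  set a1 := x ⬝ᵥ Q₁.mulVec x with ha1
  set p1 := x ⬝ᵥ Q₁.mulVec y with hp1
  set q1 := y ⬝ᵥ Q₁.mulVec x with hq1
  set b1 := y ⬝ᵥ Q₁.mulVec y with hb1
  set a2 := x ⬝ᵥ Q₂.mulVec x with ha2
  set p2 := x ⬝ᵥ Q₂.mulVec y with hp2
  set q2 := y ⬝ᵥ Q₂.mulVec x with hq2
  set b2 := y ⬝ᵥ Q₂.mulVec y with hb2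
  -- KKT dotted identities
  have hGx : x ⬝ᵥ M.mulVec x = lam₁ * a1 + lam₂ * a2 := by
    rw [hKKTx]; simp [dotProduct_add, dotProduct_smul, smul_eq_mul, ha1, ha2]
  have hGy : y ⬝ᵥ M.mulVec y = lam₁ * b1 + lam₂ * b2 := by
    rw [hKKTy]; simp [dotProduct_add, dotProduct_smul, smul_eq_mul, hb1, hb2]
  -- M-quadratic form on combinations
  have hMg : ∀ c s : ℝ, (c • x + s • y) ⬝ᵥ M.mulVec (c • x + s • y)
      = lam₁ * ((c • x + s • y) ⬝ᵥ Q₁.mulVec (c • x + s • y))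
        + lam₂ * ((c • x + s • y) ⬝ᵥ Q₂.mulVec (c • x + s • y)) := by
    intro c s
    rw [quad_expand M, quad_expand Q₁, quad_expand Q₂]
    have hxy : x ⬝ᵥ M.mulVec y = lam₁ * p1 + lam₂ * p2 := by
      rw [hKKTy]; simp [dotProduct_add, dotProduct_smul, smul_eq_mul, hp1, hp2]
    have hyx : y ⬝ᵥ M.mulVec x = lam₁ * q1 + lam₂ * q2 := by
      rw [hKKTx]; simp [dotProduct_add, dotProduct_smul, smul_eq_mul, hq1, hq2]
    rw [hGx, hGy, hxy, hyx]; ring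
  -- G = lam₁ + lam₂  (via complementary slackness), phrased as the target value
  have hcs₁' : lam₁ * (a1 + b1) = lam₁ := by linear_combination -hcs₁
  have hcs₂' : lam₂ * (a2 + b2) = lam₂ := by linear_combination -hcs₂
  have hG : x ⬝ᵥ M.mulVec x + y ⬝ᵥ M.mulVec y = lam₁ + lam₂ := by
    rw [hGx, hGy]; linear_combination hcs₁' + hcs₂'
  -- reduce to finding a good direction w and level g
  suffices h : ∃ (w : Fin 4 → ℝ) (g : ℝ), 0 < g ∧ g ≤ w ⬝ᵥ Q₁.mulVec w ∧
      g ≤ w ⬝ᵥ Q₂.mulVec w ∧ w ⬝ᵥ M.mulVec w = (lam₁ + lam₂) * g by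
    obtain ⟨w, g, hg, h1, h2, hMw⟩ := h
    refine ⟨(Real.sqrt g)⁻¹ • w, ?_, ?_, ?_⟩
    · rw [smul_quad]
      have : ((Real.sqrt g)⁻¹)^2 = g⁻¹ := by
        rw [inv_pow, Real.sq_sqrt hg.le]
      rw [this, ge_iff_le, ← inv_mul_cancel₀ hg.ne']
      exact mul_le_mul_of_nonneg_left h1 (by positivity)
    · rw [smul_quad]
      have : ((Real.sqrt g)⁻¹)^2 = g⁻¹ := by
        rw [inv_pow, Real.sq_sqrt hg.le]
      rw [this, ge_iff_le, ← inv_mul_cancel₀ hg.ne']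
      exact mul_le_mul_of_nonneg_left h2 (by positivity)
    · rw [smul_quad, hG]
      have : ((Real.sqrt g)⁻¹)^2 = g⁻¹ := by
        rw [inv_pow, Real.sq_sqrt hg.le]
      rw [this, hMw]
      field_simp
  -- case analysis on the multipliers
  rcases hlam₁.eq_or_lt with h1z | h1p
  · rcases hlam₂.eq_or_lt with h2z | h2p
    · -- both zero : contradiction with feasibility
      exfalso
      have hx0 : x = 0 := hpd0 x (le_of_eq (by rw [hGx, ← h1z, ← h2z]; ring))
      have hy0 : y = 0 := hpd0 y (le_of_eq (by rw [hGy, ← h1z, ← h2z]; ring))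
      have : a1 = 0 := by rw [ha1, hx0]; simp
      have hb : b1 = 0 := by rw [hb1, hy0]; simp
      linarith [hfeas₁]
    · -- lam₁ = 0, lam₂ > 0 : f₂ = 1
      have hf2 : a2 + b2 = 1 := by
        have := (mul_eq_zero.mp hcs₂).resolve_left (ne_of_gt h2p)
        linarith
      have hA : x ⬝ᵥ M.mulVec x = lam₂ * a2 := by rw [hGx, ← h1z]; ring
      have hB : y ⬝ᵥ M.mulVec y = lam₂ * b2 := by rw [hGy, ← h1z]; ring
      rcases le_or_gt a2 a1 with hcmp | hcmp
      · -- use w = x if a2 > 0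
        rcases le_or_gt a2 0 with ha20 | ha20
        · -- x = 0 forced; use w = y
          have hx0 : x = 0 := hpd0 x (by rw [hA]; exact mul_nonpos_of_nonneg_of_nonpos hlam₂ ha20)
          have ha2z : a2 = 0 := by rw [ha2, hx0]; simp
          have ha1z : a1 = 0 := by rw [ha1, hx0]; simp
          have hb2v : b2 = 1 := by linarith
          refine ⟨y, 1, one_pos, ?_, ?_, ?_⟩
          · show (1:ℝ) ≤ b1; linarith [hfeas₁]
          · show (1:ℝ) ≤ b2; linarith
          · rw [hB, hb2v, ← h1z]; ring
        · refine ⟨x, a2, ha20, ?_, le_refl _, ?_⟩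
          · exact hcmp
          · rw [hA, ← h1z]; ring
      ·
        have hbb : b2 < b1 := by linarith [hfeas₁]
        rcases le_or_gt b2 0 with hb20 | hb20
        · exfalso
          have hy0 : y = 0 := hpd0 y (by rw [hB]; exact mul_nonpos_of_nonneg_of_nonpos hlam₂ hb20)
          have hb2z : b2 = 0 := by rw [hb2, hy0]; simp
          have hb1z : b1 = 0 := by rw [hb1, hy0]; simp
          rw [hb1z, hb2z] at hbb; exact lt_irrefl 0 hbb
        · refine ⟨y, b2, hb20, le_of_lt hbb, le_refl _, ?_⟩
          rw [hB, ← h1z]; ring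
  · rcases hlam₂.eq_or_lt with h2z | h2p
    · -- lam₁ > 0, lam₂ = 0 : f₁ = 1
      have hf1 : a1 + b1 = 1 := by
        have := (mul_eq_zero.mp hcs₁).resolve_left (ne_of_gt h1p)
        linarith
      have hA : x ⬝ᵥ M.mulVec x = lam₁ * a1 := by rw [hGx, ← h2z]; ring
      have hB : y ⬝ᵥ M.mulVec y = lam₁ * b1 := by rw [hGy, ← h2z]; ring
      rcases le_or_gt a1 a2 with hcmp | hcmp
      · rcases le_or_gt a1 0 with ha10 | ha10
        · have hx0 : x = 0 := hpd0 x (by rw [hA]; exact mul_nonpos_of_nonneg_of_nonpos hlam₁ ha10)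
          have ha1z : a1 = 0 := by rw [ha1, hx0]; simp
          have ha2z : a2 = 0 := by rw [ha2, hx0]; simp
          have hb1v : b1 = 1 := by linarith
          refine ⟨y, 1, one_pos, ?_, ?_, ?_⟩
          · show (1:ℝ) ≤ b1; linarith
          · show (1:ℝ) ≤ b2; linarith [hfeas₂]
          · rw [hB, hb1v, ← h2z]; ring
        · refine ⟨x, a1, ha10, le_refl _, hcmp, ?_⟩
          rw [hA, ← h2z]; ring
      · have hbb : b1 < b2 := by linarith [hfeas₂]
        rcases le_or_gt b1 0 with hb10 | hb10
        · exfalso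
          have hy0 : y = 0 := hpd0 y (by rw [hB]; exact mul_nonpos_of_nonneg_of_nonpos hlam₁ hb10)
          have hb1z : b1 = 0 := by rw [hb1, hy0]; simp
          have hb2z : b2 = 0 := by rw [hb2, hy0]; simp
          rw [hb1z, hb2z] at hbb; exact lt_irrefl 0 hbb
        · refine ⟨y, b1, hb10, le_refl _, le_of_lt hbb, ?_⟩
          rw [hB, ← h2z]; ring
    · -- both positive : f₁ = f₂ = 1
      have hf1 : a1 + b1 = 1 := by
        have := (mul_eq_zero.mp hcs₁).resolve_left (ne_of_gt h1p)
        linarith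
      have hf2 : a2 + b2 = 1 := by
        have := (mul_eq_zero.mp hcs₂).resolve_left (ne_of_gt h2p)
        linarith
      -- find (c, s) ≠ 0 killing the difference form
      obtain ⟨c, s, hcs, hroot⟩ :
          ∃ c s : ℝ, (0 < c^2 + s^2) ∧
            (a1 - a2) * c^2 + ((p1 + q1) - (p2 + q2)) * (c*s) - (a1 - a2) * s^2 = 0 := by
        by_cases h : a1 - a2 = 0
        · exact ⟨1, 0, by norm_num, by linear_combination h⟩
        · set S := Real.sqrt (((p1 + q1) - (p2 + q2))^2 + 4*(a1 - a2)^2) with hSdef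
          have hS : S^2 = ((p1 + q1) - (p2 + q2))^2 + 4*(a1 - a2)^2 :=
            Real.sq_sqrt (by positivity)
          refine ⟨S - ((p1 + q1) - (p2 + q2)), 2*(a1 - a2), ?_, ?_⟩
          · have h2 : (0:ℝ) < (2*(a1 - a2))^2 := by positivity
            nlinarith [sq_nonneg (S - ((p1 + q1) - (p2 + q2)))]
          · linear_combination (a1 - a2) * hS
      have hdplus : (c • x + s • y) ⬝ᵥ Q₁.mulVec (c • x + s • y)
          - (c • x + s • y) ⬝ᵥ Q₂.mulVec (c • x + s • y) = 0 := by
        rw [quad_expand, quad_expand]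
        linear_combination hroot + s^2 * hf1 - s^2 * hf2
      have hdminus : ((-s) • x + c • y) ⬝ᵥ Q₁.mulVec ((-s) • x + c • y)
          - ((-s) • x + c • y) ⬝ᵥ Q₂.mulVec ((-s) • x + c • y) = 0 := by
        rw [quad_expand, quad_expand]
        linear_combination -hroot + c^2 * hf1 - c^2 * hf2
      have hpair : (c • x + s • y) ⬝ᵥ Q₁.mulVec (c • x + s • y)
          + ((-s) • x + c • y) ⬝ᵥ Q₁.mulVec ((-s) • x + c • y) = c^2 + s^2 := by
        rw [quad_expand, quad_expand]
        linear_combination (c^2 + s^2) * hf1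
      rcases le_or_gt ((c • x + s • y) ⬝ᵥ Q₁.mulVec (c • x + s • y)) 0 with hle | hpos
      · -- use the minus direction
        set w := (-s) • x + c • y with hw
        refine ⟨w, w ⬝ᵥ Q₁.mulVec w, by linarith, le_refl _, le_of_eq (by linarith [hdminus]), ?_⟩
        have := hMg (-s) c
        rw [← hw] at this
        rw [this]
        have h12 : w ⬝ᵥ Q₂.mulVec w = w ⬝ᵥ Q₁.mulVec w := by linarith [hdminus]
        rw [h12]; ring
      · set w := c • x + s • y with hw
        refine ⟨w, w ⬝ᵥ Q₁.mulVec w, hpos, le_refl _, le_of_eq (by linarith [hdplus]), ?_⟩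
        have := hMg c s
        rw [← hw] at this
        rw [this]
        have h12 : w ⬝ᵥ Q₂.mulVec w = w ⬝ᵥ Q₁.mulVec w := by linarith [hdplus]
        rw [h12]; ring
end

section
/- Let q₁ and q₂ be positive definite quadratic forms on ℝ² such that q₁(1,0) ≥ q₂(1,0) and q₁(0,1) ≤ q₂(0,1). Then there exists a point (s,t) ∈ ℝ² with s ≥ 0, t ≥ 0, (s,t) ≠ (0,0), and q₁(s,t) = q₂(s,t) = 1; that is, the two level-1 ellipses intersect in the closed first quadrant. -/
open Matrix

lemma quad_expand_s4 (S : Matrix (Fin 2) (Fin 2) ℝ) (a b : ℝ) :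
    (![a, b] : Fin 2 → ℝ) ⬝ᵥ S.mulVec ![a, b] =
      S 0 0 * a * a + S 0 1 * a * b + S 1 0 * b * a + S 1 1 * b * b := by
  simp [dotProduct, Matrix.mulVec, Fin.sum_univ_two]
  ring

lemma quad_smul (S : Matrix (Fin 2) (Fin 2) ℝ) (r a b : ℝ) :
    (![r * a, r * b] : Fin 2 → ℝ) ⬝ᵥ S.mulVec ![r * a, r * b] =
      r ^ 2 * ((![a, b] : Fin 2 → ℝ) ⬝ᵥ S.mulVec ![a, b]) := by
  rw [quad_expand_s4, quad_expand_s4]; ring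

lemma quad_pos (S : Matrix (Fin 2) (Fin 2) ℝ) (hS : S.PosDef) (a b : ℝ)
    (h : ¬ (a = 0 ∧ b = 0)) :
    0 < (![a, b] : Fin 2 → ℝ) ⬝ᵥ S.mulVec ![a, b] := by
  have hne : (![a, b] : Fin 2 → ℝ) ≠ 0 := by
    intro hz
    apply h
    constructor
    · have := congrFun hz 0; simpa using this
    · have := congrFun hz 1; simpa using this
  have := hS.dotProduct_mulVec_pos hne
  simpa using this

/-- Let `q₁, q₂` be positive definite quadratic forms on `ℝ²`
(given by symmetric positive definite matrices `S₁, S₂`) with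
`q₁(1,0) ≥ q₂(1,0)` and `q₁(0,1) ≤ q₂(0,1)`.  Then the two level-1 ellipses
intersect in the closed first quadrant: there is `(s,t) ≠ (0,0)` with
`s, t ≥ 0` and `q₁(s,t) = q₂(s,t) = 1`. -/
theorem ellipses_intersect_first_quadrant
    (S₁ S₂ : Matrix (Fin 2) (Fin 2) ℝ)
    (hS₁pd : S₁.PosDef) (hS₂pd : S₂.PosDef)
    (hx : (![1, 0] : Fin 2 → ℝ) ⬝ᵥ S₁.mulVec ![1, 0] ≥
          (![1, 0] : Fin 2 → ℝ) ⬝ᵥ S₂.mulVec ![1, 0])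
    (hy : (![0, 1] : Fin 2 → ℝ) ⬝ᵥ S₁.mulVec ![0, 1] ≤
          (![0, 1] : Fin 2 → ℝ) ⬝ᵥ S₂.mulVec ![0, 1]) :
    ∃ s t : ℝ, 0 ≤ s ∧ 0 ≤ t ∧ (s, t) ≠ (0, 0) ∧
      (![s, t] : Fin 2 → ℝ) ⬝ᵥ S₁.mulVec ![s, t] = 1 ∧
      (![s, t] : Fin 2 → ℝ) ⬝ᵥ S₂.mulVec ![s, t] = 1 := by
  set g : ℝ → ℝ := fun t =>
    (S₁ 0 0 * (1 - t) * (1 - t) + S₁ 0 1 * (1 - t) * t + S₁ 1 0 * t * (1 - t)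
      + S₁ 1 1 * t * t)
    - (S₂ 0 0 * (1 - t) * (1 - t) + S₂ 0 1 * (1 - t) * t + S₂ 1 0 * t * (1 - t)
      + S₂ 1 1 * t * t) with hg
  have hgeq : ∀ t : ℝ, g t =
      (![1 - t, t] : Fin 2 → ℝ) ⬝ᵥ S₁.mulVec ![1 - t, t]
      - (![1 - t, t] : Fin 2 → ℝ) ⬝ᵥ S₂.mulVec ![1 - t, t] := by
    intro t; rw [hg, quad_expand_s4, quad_expand_s4]
  have hcont : Continuous g := by
    rw [hg]; fun_prop
  have hg0 : 0 ≤ g 0 := by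
    rw [hgeq]
    have h1 : (![1 - (0:ℝ), 0] : Fin 2 → ℝ) = ![1, 0] := by
      funext i; fin_cases i <;> simp
    rw [h1]
    linarith [hx]
  have hg1 : g 1 ≤ 0 := by
    rw [hgeq]
    have h1 : (![1 - (1:ℝ), 1] : Fin 2 → ℝ) = ![0, 1] := by
      funext i; fin_cases i <;> simp
    rw [h1]
    linarith [hy]
  have hiv : (0:ℝ) ∈ Set.Icc (g 1) (g 0) := ⟨hg1, hg0⟩
  obtain ⟨t₀, ht₀mem, ht₀⟩ := intermediate_value_Icc' (by norm_num : (0:ℝ) ≤ 1)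
    hcont.continuousOn hiv
  obtain ⟨ht₀0, ht₀1⟩ := ht₀mem
  -- the direction
  set a := 1 - t₀ with ha
  have hane : ¬ (a = 0 ∧ t₀ = 0) := by
    rintro ⟨h1, h2⟩; rw [ha, h2] at h1; norm_num at h1
  have hc1 : 0 < (![a, t₀] : Fin 2 → ℝ) ⬝ᵥ S₁.mulVec ![a, t₀] :=
    quad_pos S₁ hS₁pd a t₀ hane
  set c := (![a, t₀] : Fin 2 → ℝ) ⬝ᵥ S₁.mulVec ![a, t₀] with hcdef
  have hceq : (![a, t₀] : Fin 2 → ℝ) ⬝ᵥ S₂.mulVec ![a, t₀] = c := by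
    have := hgeq t₀
    rw [ht₀] at this
    rw [hcdef, ha]
    linarith [this]
  set r := (Real.sqrt c)⁻¹ with hr
  have hsc : 0 < Real.sqrt c := Real.sqrt_pos.mpr hc1
  have hrpos : 0 < r := by positivity
  have hr2 : r ^ 2 * c = 1 := by
    rw [hr]
    rw [← Real.sq_sqrt hc1.le]
    field_simp
    rw [Real.sqrt_sq hsc.le]
  refine ⟨r * a, r * t₀, ?_, ?_, ?_, ?_, ?_⟩
  · have h0a : 0 ≤ a := by rw [ha]; linarith
    exact mul_nonneg hrpos.le h0a
  · exact mul_nonneg hrpos.le ht₀0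
  · intro h
    rw [Prod.mk.injEq] at h
    apply hane
    constructor
    · have := h.1
      rcases mul_eq_zero.mp this with h' | h'
      · exact absurd h' hrpos.ne'
      · exact h'
    · have := h.2
      rcases mul_eq_zero.mp this with h' | h'
      · exact absurd h' hrpos.ne'
      · exact h'
  · rw [quad_smul, ← hcdef, hr2]
  · rw [quad_smul, hceq, hr2]
end

section
/- Let q₁ be a positive definite quadratic form on ℝ² and let q₂ be any quadratic form on ℝ². Suppose there exists u₀ ∈ ℝ² with q₂(u₀) = 1 and q₁(u₀) ≤ 1, and there exists v ∈ ℝ² with q₂(v) < 0. Then there exists w ∈ ℝ² with q₂(w) = 1 and q₁(w) = 1; that is, the level-1 ellipse of q₁ and the level-1 hyperbola of q₂ intersect. -/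
open Matrix

private lemma symm_dot (S : Matrix (Fin 2) (Fin 2) ℝ) (hs : Sᵀ = S) (x y : Fin 2 → ℝ) :
    x ⬝ᵥ S *ᵥ y = y ⬝ᵥ S *ᵥ x := by
  rw [Matrix.dotProduct_mulVec]
  nth_rewrite 1 [← hs]
  rw [Matrix.vecMul_transpose, dotProduct_comm]

private lemma expand_dot (S : Matrix (Fin 2) (Fin 2) ℝ) (hs : Sᵀ = S)
    (a b : ℝ) (x y : Fin 2 → ℝ) :
    (a • x + b • y) ⬝ᵥ S *ᵥ (a • x + b • y)
      = a^2 * (x ⬝ᵥ S *ᵥ x) + 2*a*b*(x ⬝ᵥ S *ᵥ y) + b^2 * (y ⬝ᵥ S *ᵥ y) := by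
  simp only [Matrix.mulVec_add, Matrix.mulVec_smul, dotProduct_add, add_dotProduct,
    dotProduct_smul, smul_dotProduct, smul_eq_mul, symm_dot S hs y x]
  ring

/-- Let `q₁` be a positive definite quadratic form on `ℝ²`
and `q₂` any quadratic form (given by a symmetric matrix `S₂`).  If there
is `u₀` with `q₂(u₀) = 1` and `q₁(u₀) ≤ 1`, and there is `v` with
`q₂(v) < 0`, then there exists `w` with `q₂(w) = 1` and `q₁(w) = 1`:
the level-1 ellipse of `q₁` meets the level-1 hyperbola of `q₂`. -/
theorem ellipse_meets_hyperbola
    (S₁ S₂ : Matrix (Fin 2) (Fin 2) ℝ)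
    (hS₁pd : S₁.PosDef) (hS₂symm : S₂.IsSymm)
    (u₀ : Fin 2 → ℝ) (hu₀₂ : u₀ ⬝ᵥ S₂.mulVec u₀ = 1)
    (hu₀₁ : u₀ ⬝ᵥ S₁.mulVec u₀ ≤ 1)
    (v : Fin 2 → ℝ) (hv : v ⬝ᵥ S₂.mulVec v < 0) :
    ∃ w : Fin 2 → ℝ, w ⬝ᵥ S₂.mulVec w = 1 ∧ w ⬝ᵥ S₁.mulVec w = 1 := by
  have hS₁symm : S₁ᵀ = S₁ := hS₁pd.isHermitian
  have hS₂s : S₂ᵀ = S₂ := hS₂symm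
  -- notation
  set A : ℝ := u₀ ⬝ᵥ S₁ *ᵥ u₀ with hA
  set B₁ : ℝ := u₀ ⬝ᵥ S₁ *ᵥ v with hB₁
  set C₁ : ℝ := v ⬝ᵥ S₁ *ᵥ v with hC₁
  set B : ℝ := u₀ ⬝ᵥ S₂ *ᵥ v with hB
  set D : ℝ := -(v ⬝ᵥ S₂ *ᵥ v) with hD
  have hDpos : 0 < D := by rw [hD]; linarith
  have hu₀ne : u₀ ≠ 0 := by
    intro h
    rw [h] at hu₀₂
    simp at hu₀₂
  have hApos : 0 < A := hS₁pd.dotProduct_mulVec_pos hu₀ne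
  have hAne : A ≠ 0 := ne_of_gt hApos
  -- v is not a multiple of u₀
  have hindep : ∀ c : ℝ, v ≠ c • u₀ := by
    intro c hc
    have h2 : v ⬝ᵥ S₂ *ᵥ v = c^2 * (u₀ ⬝ᵥ S₂ *ᵥ u₀) := by
      rw [hc]
      simp only [Matrix.mulVec_smul, smul_dotProduct, dotProduct_smul,
        smul_eq_mul]
      ring
    rw [hu₀₂] at h2
    nlinarith [sq_nonneg c]
  -- positivity of k = C₁ - B₁^2/A  via pos-definiteness at (-B₁/A) • u₀ + v
  have hz : ((-B₁/A) • u₀ + (1:ℝ) • v) ≠ 0 := by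
    intro h
    apply hindep (B₁/A)
    funext i
    have h2 := congrFun h i
    simp only [Pi.add_apply, Pi.smul_apply, smul_eq_mul, one_mul, Pi.zero_apply] at h2
    show v i = (B₁/A) * u₀ i
    linear_combination h2
  have hzpos : 0 < ((-B₁/A) • u₀ + (1:ℝ) • v) ⬝ᵥ S₁ *ᵥ ((-B₁/A) • u₀ + (1:ℝ) • v) :=
    hS₁pd.dotProduct_mulVec_pos hz
  rw [expand_dot S₁ hS₁symm, ← hA, ← hB₁, ← hC₁] at hzpos
  set k : ℝ := C₁ - B₁^2 / A with hkdef
  have hk : 0 < k := by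
    have h1 : (-B₁/A)^2 * A + 2*(-B₁/A)*1*B₁ + 1^2*C₁ = C₁ - B₁^2/A := by
      field_simp
      ring
    rw [h1] at hzpos
    exact hzpos
  have hkA : A * k = A * C₁ - B₁^2 := by
    rw [hkdef]
    field_simp
  -- the path along the hyperbola
  set α : ℝ → ℝ := fun t => -B*t + Real.sqrt ((B^2+D)*t^2+1) with hα
  have hαcont : Continuous α := by rw [hα]; fun_prop
  have hsq : ∀ t : ℝ, Real.sqrt ((B^2+D)*t^2+1) ^ 2 = (B^2+D)*t^2+1 := by
    intro t
    rw [Real.sq_sqrt]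
    nlinarith [sq_nonneg t, sq_nonneg B]
  -- q₂ along the path is constantly 1
  have hq2 : ∀ t : ℝ, (α t • u₀ + t • v) ⬝ᵥ S₂ *ᵥ (α t • u₀ + t • v) = 1 := by
    intro t
    rw [expand_dot S₂ hS₂s, hu₀₂, ← hB]
    have hDv : v ⬝ᵥ S₂ *ᵥ v = -D := by rw [hD]; ring
    rw [hDv]
    simp only [hα]
    linear_combination hsq t
  -- q₁ along the path
  set f : ℝ → ℝ := fun t => (α t)^2 * A + 2*(α t)*t*B₁ + t^2*C₁ with hf
  have hfcont : Continuous f := by rw [hf]; fun_prop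
  -- lower bound f t ≥ k t²
  have hflb : ∀ t : ℝ, k * t^2 ≤ f t := by
    intro t
    have key : A * f t - A * (k * t^2) = (A * α t + t * B₁)^2 := by
      simp only [hf]
      linear_combination (-(t^2)) * hkA
    nlinarith [sq_nonneg (A * α t + t * B₁), hApos]
  -- f 0 = A ≤ 1
  have hα0 : α 0 = 1 := by simp [hα]
  have hf0 : f 0 ≤ 1 := by
    have : f 0 = A := by simp [hf, hα0]
    linarith
  -- choose T with f T ≥ 1
  set T : ℝ := Real.sqrt (1/k) with hT
  have hTnn : 0 ≤ T := Real.sqrt_nonneg _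
  have hfT : 1 ≤ f T := by
    have hT2 : T^2 = 1/k := Real.sq_sqrt (by positivity)
    have h := hflb T
    rw [hT2] at h
    have hkk : k * (1/k) = 1 := by field_simp
    rw [hkk] at h
    exact h
  -- intermediate value theorem
  have hmem : (1:ℝ) ∈ Set.Icc (f 0) (f T) := ⟨hf0, hfT⟩
  obtain ⟨t, _, ht⟩ := intermediate_value_Icc hTnn hfcont.continuousOn hmem
  refine ⟨α t • u₀ + t • v, hq2 t, ?_⟩
  rw [expand_dot S₁ hS₁symm, ← hA, ← hB₁, ← hC₁]
  exact ht
end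

section
/- Let Q₁ be a real symmetric 4×4 matrix and let x, y ∈ ℝ⁴ satisfy xᵀQ₁x ≥ 1 and xᵀQ₁x + yᵀQ₁y = 1. Then there exists θ ∈ [0, π/2] such that the rotated vector x_θ = (cos θ)·x − (sin θ)·y satisfies 0 < x_θᵀQ₁x_θ < 1. -/
open Matrix Real

/-- Let `Q₁` be a real symmetric `4 × 4` matrix and let
`x, y ∈ ℝ⁴` satisfy `xᵀQ₁x ≥ 1` and `xᵀQ₁x + yᵀQ₁y = 1`.  Then there is
`θ ∈ [0, π/2]` such that the rotated vector
`x_θ = (cos θ) x − (sin θ) y` satisfies `0 < x_θᵀQ₁x_θ < 1`. -/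
theorem rotation_reduces_case_C
    (Q₁ : Matrix (Fin 4) (Fin 4) ℝ) (hQ₁symm : Q₁.IsSymm)
    (x y : Fin 4 → ℝ)
    (hx : x ⬝ᵥ Q₁.mulVec x ≥ 1)
    (hxy : x ⬝ᵥ Q₁.mulVec x + y ⬝ᵥ Q₁.mulVec y = 1) :
    ∃ θ ∈ Set.Icc (0 : ℝ) (π / 2),
      0 < (Real.cos θ • x - Real.sin θ • y) ⬝ᵥ
            Q₁.mulVec (Real.cos θ • x - Real.sin θ • y) ∧
      (Real.cos θ • x - Real.sin θ • y) ⬝ᵥ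
            Q₁.mulVec (Real.cos θ • x - Real.sin θ • y) < 1 := by
  set f : ℝ → ℝ := fun θ =>
    (Real.cos θ • x - Real.sin θ • y) ⬝ᵥ
      Q₁.mulVec (Real.cos θ • x - Real.sin θ • y) with hf
  have hcont : Continuous f := by
    apply continuous_finset_sum
    intro i _
    apply Continuous.mul
    · fun_prop
    · unfold Matrix.mulVec dotProduct
      apply continuous_finset_sum
      intro j _
      fun_prop
  have hpi : (0 : ℝ) ≤ π / 2 := by positivity
  have h0 : f 0 = x ⬝ᵥ Q₁.mulVec x := by simp [hf, Matrix.mulVec_neg]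
  have h1 : f (π / 2) = y ⬝ᵥ Q₁.mulVec y := by simp [hf, Matrix.mulVec_neg]
  have hmem : (1 / 2 : ℝ) ∈ Set.Icc (f (π / 2)) (f 0) := by
    constructor
    · rw [h1]; linarith
    · rw [h0]; linarith
  have := intermediate_value_Icc' hpi hcont.continuousOn hmem
  obtain ⟨θ, hθ, hfθ⟩ := this
  exact ⟨θ, hθ, by rw [show (Real.cos θ • x - Real.sin θ • y) ⬝ᵥ
      Q₁.mulVec (Real.cos θ • x - Real.sin θ • y) = f θ from rfl, hfθ]; norm_num,
    by rw [show (Real.cos θ • x - Real.sin θ • y) ⬝ᵥ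
      Q₁.mulVec (Real.cos θ • x - Real.sin θ • y) = f θ from rfl, hfθ]; norm_num⟩
end
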